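/- arXiv:2510.24420 — 4 statements merged into one kernel-verified Lean document; each statement's English description precedes it below -/
import Mathlib

section
/- The identity 2t·(1 + B)·A = B − t·(1 + B)·(1 + B²) holds in ℚ⟦t⟧; that is, A admits a rational expression in terms of B and t. -/
open PowerSeries

theorem stmt_2_general (A B : PowerSeries ℚ)
    (hB : B = X * (1 + 2 * A + B + 2 * A * B + B ^ 2 + B ^ 3)) :
    2 * X * (1 + B) * A = B - X * (1 + B) * (1 + B ^ 2) := by
  linear_combination -hB

/-- The identity 2t·(1 + B)·A = B − t·(1 + B)·(1 + B²) holds in ℚ⟦t⟧. -/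
theorem stmt_2 (A B : PowerSeries ℚ)
    (hA0 : constantCoeff A = 0) (hB0 : constantCoeff B = 0)
    (hA : A = X * (A + A ^ 2 + 2 * A * B + 3 * A * B ^ 2 + B ^ 4))
    (hB : B = X * (1 + 2 * A + B + 2 * A * B + B ^ 2 + B ^ 3)) :
    2 * X * (1 + B) * A = B - X * (1 + B) * (1 + B ^ 2) :=
  stmt_2_general A B hB
end

section
/- The series B satisfies the degree-6 algebraic equation −(B + 1)⁶·t² + 2·(3B² + 1)·(B + 1)²·t − B² − 2B = 0 in ℚ⟦t⟧. -/
open PowerSeries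

theorem stmt_3_general (A B : PowerSeries ℚ)
    (hA : A = X * (A + A ^ 2 + 2 * A * B + 3 * A * B ^ 2 + B ^ 4))
    (hB : B = X * (1 + 2 * A + B + 2 * A * B + B ^ 2 + B ^ 3)) :
    -(B + 1) ^ 6 * X ^ 2 + 2 * (3 * B ^ 2 + 1) * (B + 1) ^ 2 * X - B ^ 2 - 2 * B = 0 := by
  -- `hB` is linear in `A`: `2 X (1 + B) A = B - X (1 + B) (1 + B ^ 2)`; scaling `hA` by
  -- `4 X (1 + B) ^ 2` therefore lets `hB` eliminate `A` entirely.
  have hB' : B = X * (1 + B) * (1 + 2 * A + B ^ 2) := by linear_combination hB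
  linear_combination (-4 * X * (1 + B) ^ 2) * hA +
    (X * (1 + B) * (1 + 2 * A + 4 * B + 5 * B ^ 2) - B - 2) * hB'

/-- The series B satisfies the degree-6 algebraic equation
−(B + 1)⁶·t² + 2·(3B² + 1)·(B + 1)²·t − B² − 2B = 0 in ℚ⟦t⟧. -/
theorem stmt_3 (A B : PowerSeries ℚ)
    (hA0 : constantCoeff A = 0) (hB0 : constantCoeff B = 0)
    (hA : A = X * (A + A ^ 2 + 2 * A * B + 3 * A * B ^ 2 + B ^ 4))
    (hB : B = X * (1 + 2 * A + B + 2 * A * B + B ^ 2 + B ^ 3)) :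
    -(B + 1) ^ 6 * X ^ 2 + 2 * (3 * B ^ 2 + 1) * (B + 1) ^ 2 * X - B ^ 2 - 2 * B = 0 :=
  stmt_3_general A B hA hB
end

section
/- Setting S := −B·(1 + B)⁻¹ (well defined since 1 + B is a unit of ℚ⟦t⟧, B having zero constant term), the series S satisfies the algebraic equation t² − 2·(4S² + 2S + 1)·(1 + S)²·t − S·(S + 2)·(1 + S)⁴ = 0 in ℚ⟦t⟧. -/
/-!
Put `u = 1 + B`, so that `1 + S = u⁻¹`; after multiplying by `u⁶` the claimed equation becomes
`uCurve t u = 0`. The equation for `B` factors as `B = t u (1 + 2A + B²)`, so it is linear in `A`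
and determines `E = 2 t u A` as a polynomial in `t` and `B`. Multiplying the equation for `A` by
`4 t u²` turns it into a quadratic equation in `E`, and substituting `E` yields exactly
`uCurve t u = 0`. No division by `t` is needed.
-/

open PowerSeries

section

variable {R : Type*} [CommRing R]

def uCurve (t u : R) : R :=
  t ^ 2 * u ^ 6 - 2 * t * u ^ 2 * (3 * u ^ 2 - 6 * u + 4) + u ^ 2 - 1

theorem sub_sub_eq_pow_six_mul_uCurve {t u S : R} (hu : u * (1 + S) = 1) :
    t ^ 2 - 2 * (4 * S ^ 2 + 2 * S + 1) * (1 + S) ^ 2 * t - S * (S + 2) * (1 + S) ^ 4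
      = (1 + S) ^ 6 * uCurve t u := by
  have hpow (k : ℕ) : (u * (1 + S)) ^ k = 1 := by rw [hu, one_pow]
  unfold uCurve
  linear_combination -t ^ 2 * hpow 6 - (1 + S) ^ 4 * hpow 2
    + 2 * t * (3 * (1 + S) ^ 2 * hpow 4 - 6 * (1 + S) ^ 3 * hpow 3 + 4 * (1 + S) ^ 4 * hpow 2)

theorem uCurve_one_add_eq_zero {t A B : R}
    (hA : A = t * (A + A ^ 2 + 2 * A * B + 3 * A * B ^ 2 + B ^ 4))
    (hB : B = t * (1 + 2 * A + B + 2 * A * B + B ^ 2 + B ^ 3)) :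
    uCurve t (1 + B) = 0 := by
  have hE : 2 * t * (1 + B) * A = B - t * (1 + B) * (1 + B ^ 2) := by linear_combination -hB
  unfold uCurve
  -- `4 t u² • hA` is the quadratic in `E` at `E = 2 t u A`; its difference from the same
  -- quadratic at `E = B - t u (1 + B²)` factors through `hE`.
  linear_combination 4 * t * (1 + B) ^ 2 * hA
    + (2 * t * (1 + B) * A + B - t * (1 + B) * (1 + B ^ 2)
        + 2 * t * (1 + B) * (1 + 2 * B + 3 * B ^ 2) - 2 * (1 + B)) * hE

end

theorem stmt_5_general (A B : PowerSeries ℚ)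
    (hB0 : constantCoeff B = 0)
    (hA : A = X * (A + A ^ 2 + 2 * A * B + 3 * A * B ^ 2 + B ^ 4))
    (hB : B = X * (1 + 2 * A + B + 2 * A * B + B ^ 2 + B ^ 3)) :
    ∀ S : PowerSeries ℚ, S = -B * (1 + B)⁻¹ →
      X ^ 2 - 2 * (4 * S ^ 2 + 2 * S + 1) * (1 + S) ^ 2 * X
        - S * (S + 2) * (1 + S) ^ 4 = 0 := by
  intro S hS
  have hinv : (1 + B) * (1 + B)⁻¹ = 1 := PowerSeries.mul_inv_cancel _ (by simp [hB0])
  have hu : (1 + B) * (1 + S) = 1 := by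
    rw [hS]
    linear_combination -B * hinv
  rw [sub_sub_eq_pow_six_mul_uCurve hu, uCurve_one_add_eq_zero hA hB, mul_zero]

/-- Setting S := −B·(1 + B)⁻¹, the series S satisfies the algebraic equation
t² − 2·(4S² + 2S + 1)·(1 + S)²·t − S·(S + 2)·(1 + S)⁴ = 0 in ℚ⟦t⟧. -/
theorem stmt_5 (A B : PowerSeries ℚ)
    (hA0 : constantCoeff A = 0) (hB0 : constantCoeff B = 0)
    (hA : A = X * (A + A ^ 2 + 2 * A * B + 3 * A * B ^ 2 + B ^ 4))
    (hB : B = X * (1 + 2 * A + B + 2 * A * B + B ^ 2 + B ^ 3)) :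
    ∀ S : PowerSeries ℚ, S = -B * (1 + B)⁻¹ →
      X ^ 2 - 2 * (4 * S ^ 2 + 2 * S + 1) * (1 + S) ^ 2 * X
        - S * (S + 2) * (1 + S) ^ 4 = 0 :=
  stmt_5_general A B hB0 hA hB
end

section
/- Define F := t·(1 + 3A + 2AB + A² + AB²) − 2AB in ℚ⟦t⟧. Then for every n ≥ 0, (n − 1)·[tⁿ]F = 5·[tⁿ](A·B), where [tⁿ] denotes the coefficient of tⁿ and n − 1 is taken in ℤ. -/
/-!
Write `P(A, B)` and `Q(A, B)` for the right-hand sides, so that `A = t P` and `B = t Q`, and `F = t G - 2AB`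
with `G = 1 + 3A + 2AB + A² + AB²`. Since `[tⁿ](t F' - F) = (n - 1) [tⁿ]F`, the claim is the identity
`t F' - F = 5AB`. Differentiating the system gives `(1 - tJ) (A', B') = (P, Q)`, where `J` is the Jacobian
of `(P, Q)`; its determinant `Δ` has constant term `1`, so it can be cancelled, and Cramer's rule expresses `Δ A'` and `Δ B'`
polynomially in `t, A, B`. Then `Δ (t F' - F - 5AB)` is a polynomial in `t, A, B` lying in the ideal
generated by `A - tP` and `B - tQ`.
-/

open PowerSeries

@[simp]
theorem PowerSeries.derivative_ofNat {R : Type*} [CommSemiring R] (n : ℕ) [n.AtLeastTwo] :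
    d⁄dX R (ofNat(n) : R⟦X⟧) = 0 :=
  (d⁄dX R).map_natCast n

theorem PowerSeries.coeff_X_mul_derivative_sub {R : Type*} [CommRing R] (f : R⟦X⟧) (n : ℕ) :
    coeff n (X * d⁄dX R f - f) = ((n : R) - 1) * coeff n f := by
  cases n with
  | zero => simp
  | succ m =>
    rw [map_sub, coeff_succ_X_mul, coeff_derivative]
    push_cast
    ring

namespace FiveCTriangulation

variable {A B : ℚ⟦X⟧}

theorem jacobian_mul_derivative_fst
    (hA : A = X * (A + A ^ 2 + 2 * A * B + 3 * A * B ^ 2 + B ^ 4)) :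
    (1 - X * (1 + 2 * A + 2 * B + 3 * B ^ 2)) * d⁄dX ℚ A
        - X * (2 * A + 6 * A * B + 4 * B ^ 3) * d⁄dX ℚ B
      = A + A ^ 2 + 2 * A * B + 3 * A * B ^ 2 + B ^ 4 := by
  have h := congrArg (d⁄dX ℚ) hA
  simp only [Derivation.leibniz, Derivation.leibniz_pow, map_add, derivative_X, derivative_ofNat,
    smul_eq_mul, nsmul_eq_mul] at h
  linear_combination h

theorem jacobian_mul_derivative_snd
    (hB : B = X * (1 + 2 * A + B + 2 * A * B + B ^ 2 + B ^ 3)) :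
    - X * (2 + 2 * B) * d⁄dX ℚ A + (1 - X * (1 + 2 * A + 2 * B + 3 * B ^ 2)) * d⁄dX ℚ B
      = 1 + 2 * A + B + 2 * A * B + B ^ 2 + B ^ 3 := by
  have h := congrArg (d⁄dX ℚ) hB
  simp only [Derivation.leibniz, Derivation.leibniz_pow, map_add, derivative_X, derivative_ofNat,
    Derivation.map_one_eq_zero, smul_eq_mul, nsmul_eq_mul] at h
  linear_combination h

theorem X_mul_derivative_sub_eq
    (hA : A = X * (A + A ^ 2 + 2 * A * B + 3 * A * B ^ 2 + B ^ 4))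
    (hB : B = X * (1 + 2 * A + B + 2 * A * B + B ^ 2 + B ^ 3)) :
    X * d⁄dX ℚ (X * (1 + 3 * A + 2 * A * B + A ^ 2 + A * B ^ 2) - 2 * A * B)
        - (X * (1 + 3 * A + 2 * A * B + A ^ 2 + A * B ^ 2) - 2 * A * B)
      = 5 * (A * B) := by
  have hA' := jacobian_mul_derivative_fst hA
  have hB' := jacobian_mul_derivative_snd hB
  set Δ : ℚ⟦X⟧ := (1 - X * (1 + 2 * A + 2 * B + 3 * B ^ 2)) ^ 2
    - X ^ 2 * (2 * A + 6 * A * B + 4 * B ^ 3) * (2 + 2 * B) with hΔ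
  have hΔ_ne : Δ ≠ 0 := fun h ↦ by simpa [hΔ] using congrArg constantCoeff h
  have hΔA : Δ * d⁄dX ℚ A
      = (1 - X * (1 + 2 * A + 2 * B + 3 * B ^ 2)) * (A + A ^ 2 + 2 * A * B + 3 * A * B ^ 2 + B ^ 4)
        + X * (2 * A + 6 * A * B + 4 * B ^ 3) * (1 + 2 * A + B + 2 * A * B + B ^ 2 + B ^ 3) := by
    linear_combination (1 - X * (1 + 2 * A + 2 * B + 3 * B ^ 2)) * hA'
      + X * (2 * A + 6 * A * B + 4 * B ^ 3) * hB'
  have hΔB : Δ * d⁄dX ℚ B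
      = X * (2 + 2 * B) * (A + A ^ 2 + 2 * A * B + 3 * A * B ^ 2 + B ^ 4)
        + (1 - X * (1 + 2 * A + 2 * B + 3 * B ^ 2)) * (1 + 2 * A + B + 2 * A * B + B ^ 2 + B ^ 3) := by
    linear_combination X * (2 + 2 * B) * hA' + (1 - X * (1 + 2 * A + 2 * B + 3 * B ^ 2)) * hB'
  apply mul_left_cancel₀ hΔ_ne
  simp only [Derivation.leibniz, Derivation.leibniz_pow, map_add, map_sub, derivative_X,
    derivative_ofNat, Derivation.map_one_eq_zero, smul_eq_mul, nsmul_eq_mul]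
  -- the cofactors of `hA` and `hB` solve a linear system over `ℚ` (cofactor degree ≤ 6)
  linear_combination X * (X * (3 + 2 * A + 2 * B + B ^ 2) - 2 * B) * hΔA
    + X * (X * (2 * A + 2 * A * B) - 2 * A) * hΔB
    + (4 * X ^ 2 * A ^ 2 - 4 * X ^ 2 * A * B ^ 2 - 8 * X ^ 2 * A * B + 4 * X ^ 2 * A - X ^ 2 * B ^ 4
      + 4 * X ^ 2 * B ^ 3 + 10 * X ^ 2 * B ^ 2 + 4 * X ^ 2 * B + 3 * X ^ 2 + 4 * X * A * B
      - 2 * X * A + 8 * X * B ^ 3 + 9 * X * B ^ 2 + 2 * X * B - X - 4 * B) * hA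
    + (-4 * X ^ 2 * A ^ 2 * B + 4 * X ^ 2 * A * B ^ 3 + 4 * X ^ 2 * A * B ^ 2 - 12 * X ^ 2 * A * B
      - 4 * X ^ 2 * A - 8 * X ^ 2 * B ^ 4 - 12 * X ^ 2 * B ^ 3 - 9 * X * A * B ^ 2 - 10 * X * A * B
      - 3 * X * A - 6 * X * B ^ 4 + A) * hB

end FiveCTriangulation

theorem stmt_6_general (A B : PowerSeries ℚ)
    (hA : A = X * (A + A ^ 2 + 2 * A * B + 3 * A * B ^ 2 + B ^ 4))
    (hB : B = X * (1 + 2 * A + B + 2 * A * B + B ^ 2 + B ^ 3)) :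
    ∀ n : ℕ,
      (((n : ℤ) - 1 : ℤ) : ℚ) *
        coeff n (X * (1 + 3 * A + 2 * A * B + A ^ 2 + A * B ^ 2) - 2 * A * B)
      = 5 * coeff n (A * B) := by
  intro n
  have h := congrArg (coeff n) (FiveCTriangulation.X_mul_derivative_sub_eq hA hB)
  rw [coeff_X_mul_derivative_sub, ← map_ofNat C 5, coeff_C_mul] at h
  push_cast
  exact h

/-- Define F := t·(1 + 3A + 2AB + A² + AB²) − 2AB. Then for every n ≥ 0,
(n − 1)·[tⁿ]F = 5·[tⁿ](A·B), where n − 1 is taken in ℤ. -/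
theorem stmt_6 (A B : PowerSeries ℚ)
    (hA0 : constantCoeff A = 0) (hB0 : constantCoeff B = 0)
    (hA : A = X * (A + A ^ 2 + 2 * A * B + 3 * A * B ^ 2 + B ^ 4))
    (hB : B = X * (1 + 2 * A + B + 2 * A * B + B ^ 2 + B ^ 3)) :
    ∀ n : ℕ,
      (((n : ℤ) - 1 : ℤ) : ℚ) *
        coeff n (X * (1 + 3 * A + 2 * A * B + A ^ 2 + A * B ^ 2) - 2 * A * B)
      = 5 * coeff n (A * B) :=
  stmt_6_general A B hA hB
end
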